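/- Let G be a finite solvable group and let p, q, r be three distinct primes dividing |G|. Then G contains an element whose order is the product of two of these three primes (i.e., an element of order pq, pr, or qr). -/

import Mathlib

/-- A group `H` is a `σ`-group if every prime dividing its order lies in `σ`. -/
def IsSigmaGroup (σ : Set ℕ) (H : Type*) [Group H] : Prop :=
  ∀ p : ℕ, p.Prime → p ∣ Nat.card H → p ∈ σ

/-- The prime graph (Gruenberg–Kegel graph) of a group `G`, as a graph on `ℕ`:
two distinct primes `p, q` are adjacent iff `G` has an element of order `p * q`. -/
def primeGraph (G : Type*) [Group G] : SimpleGraph ℕ where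
  Adj p q := p ≠ q ∧ p.Prime ∧ q.Prime ∧ ∃ g : G, orderOf g = p * q
  symm := by
    constructor
    rintro p q ⟨h1, h2, h3, g, hg⟩
    exact ⟨h1.symm, h3, h2, g, hg.trans (mul_comm p q)⟩
  loopless := by constructor; rintro p ⟨h, -⟩; exact h rfl

/-- The vertex set of the prime graph of `G`: the primes dividing `|G|`. -/
def primeVerts (G : Type*) [Group G] : Set ℕ :=
  {p | p.Prime ∧ p ∣ Nat.card G}

/-- `σ` is a cut-set of `Γ(G)`: deleting the vertices of `σ` disconnects the graph. -/
def IsCutSet (G : Type*) [Group G] (σ : Set ℕ) : Prop :=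
  ¬ ((primeGraph G).induce (primeVerts G \ σ)).Preconnected

/-- A cut-set is minimal if no proper subset of it is a cut-set. -/
def IsMinimalCutSet (G : Type*) [Group G] (σ : Set ℕ) : Prop :=
  IsCutSet G σ ∧ ∀ τ : Set ℕ, τ ⊂ σ → ¬ IsCutSet G τ

/-- `O_σ(G)`: the largest normal `σ`-subgroup of `G` (the join of all normal
`σ`-subgroups, realized as a normal closure so that it is normal by definition). -/
def sigmaCore (σ : Set ℕ) (G : Type*) [Group G] : Subgroup G :=
  Subgroup.normalClosure {x : G | ∃ H : Subgroup G, H.Normal ∧ IsSigmaGroup σ H ∧ x ∈ H}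

instance sigmaCore_normal (σ : Set ℕ) (G : Type*) [Group G] : (sigmaCore σ G).Normal :=
  Subgroup.normalClosure_normal

/-- The Fitting subgroup of `G`: the join of all nilpotent normal subgroups. -/
def fittingSubgroup (G : Type*) [Group G] : Subgroup G :=
  Subgroup.normalClosure {x : G | ∃ H : Subgroup G, H.Normal ∧ Group.IsNilpotent H ∧ x ∈ H}

instance fittingSubgroup_normal (G : Type*) [Group G] : (fittingSubgroup G).Normal :=
  Subgroup.normalClosure_normal

/-- The factor `H/K` (for `K ⊴ G`), i.e. the image of `H` in `G/K`, is nilpotent. -/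
def NilpotentFactor {G : Type*} [Group G] (K H : Subgroup G) (hK : K.Normal) : Prop :=
  letI := hK
  Group.IsNilpotent (H.map (QuotientGroup.mk' K))

/-- The factor `H/K` (for `K ⊴ G`), i.e. the image of `H` in `G/K`, is a `σ`-group. -/
def SigmaFactor (σ : Set ℕ) {G : Type*} [Group G] (K H : Subgroup G) (hK : K.Normal) : Prop :=
  letI := hK
  IsSigmaGroup σ (H.map (QuotientGroup.mk' K))

/-- The quotient `G/K` is nilpotent. -/
def QuotNilpotent {G : Type*} [Group G] (K : Subgroup G) (hK : K.Normal) : Prop :=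
  letI := hK
  Group.IsNilpotent (G ⧸ K)

/-- `G` has a normal series of length `n` with nilpotent factors. -/
def HasNilpotentSeries (G : Type*) [Group G] (n : ℕ) : Prop :=
  ∃ (f : Fin (n + 1) → Subgroup G) (hN : ∀ i, (f i).Normal),
    f 0 = ⊥ ∧ f (Fin.last n) = ⊤ ∧ Monotone f ∧
    ∀ i : Fin n, NilpotentFactor (f i.castSucc) (f i.succ) (hN i.castSucc)

/-- The Fitting length `ℓ_F(G)`: the minimal length of a normal series of `G`
with nilpotent factors. -/
noncomputable def fittingLength (G : Type*) [Group G] : ℕ :=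
  sInf {n | HasNilpotentSeries G n}

/-- The Fitting length of the quotient `G/K` is at most `m`. -/
def QuotFittingLengthLE {G : Type*} [Group G] (K : Subgroup G) (hK : K.Normal) (m : ℕ) : Prop :=
  letI := hK
  fittingLength (G ⧸ K) ≤ m

/-- `ℓ_σ(G) ≤ k`: `G` has a normal series all of whose factors are `σ`-groups or
`σ'`-groups, with at most `k` factors that are `σ`-groups. -/
def SigmaLengthLE (σ : Set ℕ) (G : Type*) [Group G] (k : ℕ) : Prop :=
  ∃ (n : ℕ) (f : Fin (n + 1) → Subgroup G) (hN : ∀ i, (f i).Normal),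
    f 0 = ⊥ ∧ f (Fin.last n) = ⊤ ∧ Monotone f ∧
    (∀ i : Fin n,
      SigmaFactor σ (f i.castSucc) (f i.succ) (hN i.castSucc) ∨
      SigmaFactor σᶜ (f i.castSucc) (f i.succ) (hN i.castSucc)) ∧
    Nat.card {i : Fin n // SigmaFactor σ (f i.castSucc) (f i.succ) (hN i.castSucc)} ≤ k

/-- The derived length of `G`. -/
noncomputable def derivedLength (G : Type*) [Group G] : ℕ :=
  sInf {n | derivedSeries G n = ⊥}

/-- `π₁` and `π₂` are the vertex sets of the two connected components of `Γ(G) − σ`. -/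
def IsPiComponents (G : Type*) [Group G] (σ π₁ π₂ : Set ℕ) : Prop :=
  π₁.Nonempty ∧ π₂.Nonempty ∧ Disjoint π₁ π₂ ∧ π₁ ∪ π₂ = primeVerts G \ σ ∧
  ((primeGraph G).induce π₁).Preconnected ∧ ((primeGraph G).induce π₂).Preconnected ∧
  ∀ a ∈ π₁, ∀ b ∈ π₂, ¬ (primeGraph G).Adj a b

/-- `π₁ = π₁(G)` and `π₂ = π₂(G)` relative to the cut-set `σ`: the vertex sets of the
two components of `Γ(G) − σ`, labelled so that `F(G/O_σ(G))` is a `π₁`-group. -/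
def IsPiPartition (G : Type*) [Group G] (σ π₁ π₂ : Set ℕ) : Prop :=
  IsPiComponents G σ π₁ π₂ ∧ IsSigmaGroup π₁ (fittingSubgroup (G ⧸ sigmaCore σ G))

/-- `G` is a Frobenius group: it has a nontrivial proper malnormal subgroup. -/
def IsFrobenius (G : Type*) [Group G] : Prop :=
  ∃ H : Subgroup G, ⊥ < H ∧ H < ⊤ ∧
    ∀ g : G, g ∉ H → H ⊓ H.map (MulAut.conj g).toMonoidHom = ⊥

/-- `G` is a Frobenius group with Frobenius kernel `K`. -/
def IsFrobeniusWithKernel (G : Type*) [Group G] (K : Subgroup G) : Prop :=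
  K.Normal ∧ ∃ H : Subgroup G, ⊥ < H ∧ H < ⊤ ∧
    (∀ g : G, g ∉ H → H ⊓ H.map (MulAut.conj g).toMonoidHom = ⊥) ∧
    K ⊓ H = ⊥ ∧ K ⊔ H = ⊤

/-- `G` is a `2`-Frobenius group. -/
def Is2Frobenius (G : Type*) [Group G] : Prop :=
  ∃ (F₁ F₂ : Subgroup G) (h₁ : F₁.Normal) (_h₂ : F₂.Normal), F₁ ≤ F₂ ∧
    IsFrobeniusWithKernel F₂ (F₁.subgroupOf F₂) ∧
    (letI := h₁
     IsFrobeniusWithKernel (G ⧸ F₁) (F₂.map (QuotientGroup.mk' F₁)))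

/-- The second Fitting subgroup `F₂(G)`: the preimage in `G` of `F(G/F(G))`. -/
def secondFittingSubgroup (G : Type*) [Group G] : Subgroup G :=
  (fittingSubgroup (G ⧸ fittingSubgroup G)).comap (QuotientGroup.mk' (fittingSubgroup G))

instance secondFittingSubgroup_normal (G : Type*) [Group G] :
    (secondFittingSubgroup G).Normal :=
  Subgroup.Normal.comap inferInstance _
/-!
Replace `G` by a subgroup `L` whose order is divisible by `p, q, r` and by no other prime; such a
subgroup exists in every finite solvable group (induct over a nontrivial normal abelian `t`-subgroup
`B`, lifting from `G ⧸ B` and splitting off `B` by Schur–Zassenhaus when `t` is not wanted).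

In `L` pick a nontrivial normal abelian `t`-subgroup `B`, say `t = p`. Doing the same inside a
subgroup whose order involves exactly `q` and `r` gives, say, a nontrivial abelian `q`-group `M`
normalised by an element `y` of order `r`. If `L` has no element of order `pq`, `pr` or `qr`, then
every element of order `q` or `r` acts fixed-point-freely on `B`. Either `M` contains
`⟨z⟩ × ⟨w⟩ ≅ C_q × C_q`, or `y` normalises without centralising a subgroup `⟨z⟩` of order `q`.
In both cases `⟨z, w⟩` resp. `⟨z, y⟩` is the union of `q + 1` cyclic subgroups that act
fixed-point-freely and pairwise meet trivially. Comparing the product of their trivial norms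
`∏ h, h • b` with the norm of the whole group gives `b ^ q = 1` for every `b ∈ B`, which is
impossible in a nontrivial `p`-group.
-/

open Subgroup
open MonoidHom (FixedPointFree)

universe u

section Hall

variable {G : Type u} [Group G]

theorem IsPGroup.eq_of_prime_dvd_card {H : Type*} [Group H] [Finite H] {p s : ℕ} [Fact p.Prime]
    (hH : IsPGroup p H) (hs : s.Prime) (hdvd : s ∣ Nat.card H) : s = p := by
  obtain ⟨k, hk⟩ := IsPGroup.iff_card.mp hH
  exact (Nat.prime_dvd_prime_iff_eq hs Fact.out).mp (hs.dvd_of_dvd_pow (hk ▸ hdvd))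

theorem card_comap_mk' (B : Subgroup G) [B.Normal] (H : Subgroup (G ⧸ B)) :
    Nat.card (H.comap (QuotientGroup.mk' B)) = Nat.card B * Nat.card H :=
  QuotientGroup.card_preimage_mk B H

theorem relIndex_comap_mk' (B : Subgroup G) [B.Normal] (H : Subgroup (G ⧸ B)) :
    B.relIndex (H.comap (QuotientGroup.mk' B)) = Nat.card H := by
  have h := relIndex_ker (K := H.comap (QuotientGroup.mk' B)) (QuotientGroup.mk' B)
  rwa [QuotientGroup.ker_mk', map_comap_eq_self_of_surjective (QuotientGroup.mk'_surjective B)] at h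

theorem exists_card_eq_relIndex_of_coprime {B K : Subgroup G} [B.Normal] (hBK : B ≤ K)
    (hcop : (Nat.card B).Coprime (B.relIndex K)) : ∃ D : Subgroup G, Nat.card D = B.relIndex K := by
  have hcard : Nat.card (B.subgroupOf K) = Nat.card B :=
    Nat.card_congr (subgroupOfEquivOfLe hBK).toEquiv
  rw [← hcard] at hcop
  obtain ⟨D, hD⟩ := exists_right_complement'_of_coprime hcop
  exact ⟨D.map K.subtype, (card_map_of_injective K.subtype_injective).trans
    hD.symm.index_eq_card.symm⟩

variable [Finite G]

theorem exists_normal_isPGroup_isMulCommutative [Group.IsSolvable G] [Nontrivial G] :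
    ∃ (t : ℕ) (B : Subgroup G), t.Prime ∧ B.Normal ∧ IsMulCommutative B ∧ IsPGroup t B ∧
      B ≠ ⊥ := by
  classical
  have hsolv : ∃ n, derivedSeries G n = ⊥ := Group.IsSolvable.solvable
  have hn0 : Nat.find hsolv ≠ 0 := fun h ↦ top_ne_bot (α := Subgroup G) <| by
    simpa [h] using Nat.find_spec hsolv
  set A := derivedSeries G (Nat.find hsolv - 1)
  have hA : A ≠ ⊥ := Nat.find_min hsolv (Nat.sub_one_lt hn0)
  have : IsMulCommutative A := by
    rw [← commutator_self_eq_bot_iff, ← derivedSeries_succ, Nat.sub_add_cancel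
      (Nat.one_le_iff_ne_zero.mpr hn0)]
    exact Nat.find_spec hsolv
  obtain ⟨t, ht, htA⟩ := Nat.exists_prime_and_dvd (mt Subgroup.card_eq_one.mp hA)
  have : Fact t.Prime := ⟨ht⟩
  obtain ⟨P⟩ : Nonempty (Sylow t A) := inferInstance
  have : (P : Subgroup A).Characteristic := P.characteristic_of_normal inferInstance
  refine ⟨t, (P : Subgroup A).map A.subtype, ht, inferInstance, inferInstance,
    P.isPGroup'.map _, ?_⟩
  rw [Ne, map_eq_bot_iff_of_injective _ A.subtype_injective]
  exact P.ne_bot_of_dvd_card htA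

theorem exists_isSigmaGroup_dvd_card [Group.IsSolvable G] (π : Set ℕ) :
    ∃ H : Subgroup G, IsSigmaGroup π H ∧ ∀ s ∈ π, s.Prime → s ∣ Nat.card G → s ∣ Nat.card H := by
  induction hn : Nat.card G using Nat.strong_induction_on generalizing G with
  | _ n ih =>
  subst hn
  rcases subsingleton_or_nontrivial G with hG | hG
  · refine ⟨⊥, fun s hs hdvd ↦ ?_, fun s _ hs hdvd ↦ ?_⟩
    · exact (hs.not_dvd_one (card_bot (G := G) ▸ hdvd)).elim
    · exact (hs.not_dvd_one (Nat.card_unique (α := G) ▸ hdvd)).elim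
  obtain ⟨t, B, ht, hBn, -, hBt, hB⟩ := exists_normal_isPGroup_isMulCommutative (G := G)
  have : Fact t.Prime := ⟨ht⟩
  have hcardG : Nat.card G = Nat.card B * Nat.card (G ⧸ B) := by
    rw [mul_comm, card_eq_card_quotient_mul_card_subgroup B]
  obtain ⟨H, hHπ, hHdvd⟩ := ih _ (hcardG ▸ lt_mul_of_one_lt_left Nat.card_pos
    ((one_lt_card_iff_ne_bot B).mpr hB)) (G := G ⧸ B) rfl
  by_cases htπ : t ∈ π
  · refine ⟨H.comap (QuotientGroup.mk' B), fun s hs hdvd ↦ ?_, fun s hsπ hs hdvd ↦ ?_⟩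
    · rw [card_comap_mk'] at hdvd
      rcases hs.dvd_mul.mp hdvd with h | h
      · exact hBt.eq_of_prime_dvd_card hs h ▸ htπ
      · exact hHπ s hs h
    · rw [card_comap_mk']
      rcases hs.dvd_mul.mp (hcardG ▸ hdvd) with h | h
      · exact dvd_mul_of_dvd_left h _
      · exact dvd_mul_of_dvd_right (hHdvd s hsπ hs h) _
  · have hcop : (Nat.card B).Coprime (B.relIndex (H.comap (QuotientGroup.mk' B))) := by
      obtain ⟨k, hk⟩ := IsPGroup.iff_card.mp hBt
      rw [relIndex_comap_mk', hk]
      exact Nat.Coprime.pow_left _ <| (Nat.Prime.coprime_iff_not_dvd ht).mpr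
        fun h ↦ htπ (hHπ t ht h)
    obtain ⟨D, hD⟩ := exists_card_eq_relIndex_of_coprime (QuotientGroup.le_comap_mk' B H) hcop
    rw [relIndex_comap_mk'] at hD
    refine ⟨D, fun s hs h ↦ hHπ s hs (hD ▸ h), fun s hsπ hs hdvd ↦ hD ▸ ?_⟩
    rcases hs.dvd_mul.mp (hcardG ▸ hdvd) with h | h
    · exact absurd (hBt.eq_of_prime_dvd_card hs h ▸ hsπ) htπ
    · exact hHdvd s hsπ hs h

theorem exists_isPGroup_isMulCommutative_le_normalizer [Group.IsSolvable G] {π : Set ℕ} {s : ℕ}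
    (hsπ : s ∈ π) (hs : s.Prime) (hsG : s ∣ Nat.card G) :
    ∃ (u : ℕ) (K M : Subgroup G), u ∈ π ∧ u.Prime ∧
      (∀ s ∈ π, s.Prime → s ∣ Nat.card G → s ∣ Nat.card K) ∧ K ≤ normalizer (M : Set G) ∧
      IsMulCommutative M ∧ IsPGroup u M ∧ M ≠ ⊥ := by
  obtain ⟨K, hKπ, hKdvd⟩ := exists_isSigmaGroup_dvd_card (G := G) π
  have : Nontrivial K := Finite.one_lt_card_iff_nontrivial.mp
    (hs.one_lt.trans_le (Nat.le_of_dvd Nat.card_pos (hKdvd s hsπ hs hsG)))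
  obtain ⟨u, M, hu, hMn, hMc, hMu, hM⟩ := exists_normal_isPGroup_isMulCommutative (G := K)
  have : Fact u.Prime := ⟨hu⟩
  refine ⟨u, K, M.map K.subtype, hKπ u hu ?_, hu, hKdvd, ?_, inferInstance, hMu.map _, ?_⟩
  · exact (hMu.card_eq_or_dvd.resolve_left (mt card_eq_one.mp hM)).trans
      (card_subgroup_dvd_card M)
  · have h := le_normalizer_map (H := M) K.subtype
    rwa [normalizer_eq_top, ← MonoidHom.range_eq_map, range_subtype] at h
  · rwa [Ne, map_eq_bot_iff_of_injective _ K.subtype_injective]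

end Hall
section FixedPointFree

variable {A : Type*} [CommGroup A]

theorem pow_eq_pow_of_natCast_eq {M : Type*} [Monoid M] {g : M} {m a b : ℕ} (hg : g ^ m = 1)
    (h : (a : ZMod m) = b) : g ^ a = g ^ b := by
  rw [pow_eq_pow_mod a hg, pow_eq_pow_mod b hg, (ZMod.natCast_eq_natCast_iff' a b m).mp h]

theorem prod_pow_val_apply_eq_one {m : ℕ} [NeZero m] {ρ : MulAut A} (hρ : FixedPointFree ρ)
    (hm : ρ ^ m = 1) (b : A) : ∏ c : ZMod m, (ρ ^ c.val) b = 1 := by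
  refine hρ _ ?_
  rw [map_prod]
  refine Fintype.prod_equiv (Equiv.addRight 1) _ _ fun c ↦ ?_
  rw [← MulAut.mul_apply, ← pow_succ', Equiv.coe_addRight,
    pow_eq_pow_of_natCast_eq hm (b := (c + 1).val) (by simp)]

/-- `hcover` says that for `i ≠ 0` the elements `β ^ c * α ^ i` are the `γ c ^ i`; so the product
of the (trivial) norms of the `⟨γ c⟩` is `b ^ q` times a product of norms of `⟨β⟩`. -/
theorem pow_eq_one_of_fixedPointFree {K : Type*} [Group K] (χ : K →* MulAut A) {n q : ℕ}
    [NeZero n] [NeZero q] {α β : K} {γ : ZMod q → K} (hβ : β ^ q = 1) (hγ : ∀ c, γ c ^ n = 1)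
    (hβfix : FixedPointFree (χ β)) (hγfix : ∀ c, FixedPointFree (χ (γ c)))
    (hcover : ∀ i : ZMod n, i ≠ 0 →
      ∃ e : ZMod q ≃ ZMod q, ∀ c, β ^ (e c).val * α ^ i.val = γ c ^ i.val)
    (b : A) : b ^ q = 1 := by
  have hcoset : ∀ i : ZMod n, ∏ c : ZMod q, χ (β ^ c.val * α ^ i.val) b = 1 := fun i ↦ by
    simp_rw [map_mul, map_pow, MulAut.mul_apply]
    exact prod_pow_val_apply_eq_one hβfix (by rw [← map_pow, hβ, map_one]) _
  have hnorm : ∏ i : ZMod n, ∏ c : ZMod q, χ (γ c ^ i.val) b = 1 := by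
    rw [Finset.prod_comm]
    refine Fintype.prod_eq_one _ fun c ↦ ?_
    simp_rw [map_pow]
    exact prod_pow_val_apply_eq_one (hγfix c) (by rw [← map_pow, hγ, map_one]) b
  have hrest : ∏ i ∈ ({0}ᶜ : Finset (ZMod n)), ∏ c : ZMod q, χ (γ c ^ i.val) b = 1 := by
    refine Finset.prod_eq_one fun i hi ↦ ?_
    obtain ⟨e, he⟩ := hcover i (Finset.mem_compl.mp hi ∘ Finset.mem_singleton.mpr)
    rw [← hcoset i, ← e.prod_comp fun c ↦ χ (β ^ c.val * α ^ i.val) b]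
    simp_rw [he]
  rw [Fintype.prod_eq_mul_prod_compl 0, hrest] at hnorm
  simpa [ZMod.card] using hnorm

end FixedPointFree

section Conjugation

variable {G : Type*} [Group G]

theorem exists_orderOf_eq_mul_of_commute {p k : ℕ} (hp : p.Prime) {g b : G} (hgb : Commute g b)
    (hbk : orderOf b = p ^ k) (hb : b ≠ 1) (hg : (orderOf g).Coprime p) :
    ∃ h : G, orderOf h = orderOf g * p := by
  have hk : k ≠ 0 := by
    rintro rfl
    exact hb (orderOf_eq_one_iff.mp (by rw [hbk, pow_zero]))
  have hb0 : orderOf b ≠ 0 := hbk ▸ pow_ne_zero k hp.ne_zero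
  have hpb : orderOf (b ^ (orderOf b / p)) = p :=
    orderOf_pow_orderOf_div hb0 (hbk ▸ dvd_pow_self p hk)
  exact ⟨g * b ^ (orderOf b / p), by
    rw [(hgb.pow_right _).orderOf_mul_eq_mul_orderOf_of_coprime (by rwa [hpb]), hpb]⟩

theorem fixedPointFree_conjNormal {p : ℕ} [Fact p.Prime] {B : Subgroup G} [B.Normal]
    (hB : IsPGroup p B) {g : G} (hg : (orderOf g).Coprime p)
    (hno : ∀ h : G, orderOf h ≠ orderOf g * p) :
    FixedPointFree (MulAut.conjNormal g : MulAut B) := by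
  intro b hb
  by_contra hb1
  obtain ⟨k, hk⟩ := IsPGroup.iff_orderOf.mp hB b
  have hcomm : Commute g b := by
    have h := congrArg Subtype.val hb
    rw [MulAut.conjNormal_apply] at h
    exact mul_inv_eq_iff_eq_mul.mp h
  obtain ⟨h, hh⟩ := exists_orderOf_eq_mul_of_commute Fact.out hcomm
    (by rwa [orderOf_coe]) (by simpa using hb1) hg
  exact hno h hh

theorem conj_pow_eq_pow_pow {y z : G} {k : ℕ} (h : y * z * y⁻¹ = z ^ k) (i : ℕ) :
    y ^ i * z * (y ^ i)⁻¹ = z ^ k ^ i := by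
  induction i with
  | zero => simp
  | succ i ih =>
    calc y ^ (i + 1) * z * (y ^ (i + 1))⁻¹ = y * (y ^ i * z * (y ^ i)⁻¹) * y⁻¹ := by group
      _ = (y * z * y⁻¹) ^ k ^ i := by rw [ih, conj_pow]
      _ = z ^ k ^ (i + 1) := by rw [h, ← pow_mul, pow_succ']

end Conjugation

section Action

open scoped IsMulCommutative

variable {G : Type*} [Group G] {B : Subgroup G} [B.Normal] [IsMulCommutative B]

theorem pow_eq_one_of_commute_of_notMem_zpowers {q : ℕ} [Fact q.Prime] {z w : G}
    (hzw : Commute z w) (hz : orderOf z = q) (hw : w ^ q = 1) (hwz : w ∉ zpowers z)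
    (hfix : ∀ g : G, orderOf g = q → FixedPointFree (MulAut.conjNormal g : MulAut B)) (b : B) :
    b ^ q = 1 := by
  have hzq : z ^ q = 1 := hz ▸ pow_orderOf_eq_one z
  have hγ : ∀ c : ZMod q, (w * z ^ c.val) ^ q = 1 := fun c ↦ by
    rw [(hzw.symm.pow_right _).mul_pow, hw, ← pow_mul, mul_comm, pow_mul, hzq, one_pow, one_mul]
  refine pow_eq_one_of_fixedPointFree MulAut.conjNormal (α := w) hzq hγ (hfix z hz)
    (fun c ↦ hfix _ (orderOf_eq_prime (hγ c) fun h ↦ hwz ?_))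
    (fun i hi ↦ ⟨Equiv.mulRight₀ i hi, fun c ↦ ?_⟩) b
  · rw [mul_eq_one_iff_eq_inv.mp h]
    exact inv_mem (pow_mem (mem_zpowers z) _)
  · rw [(hzw.symm.pow_right _).mul_pow, ← pow_mul, Equiv.mulRight₀_apply,
      ← (hzw.pow_pow _ _).eq, pow_eq_pow_of_natCast_eq hzq (b := c.val * i.val) (by simp)]

theorem pow_eq_one_of_conj_mem_zpowers {q r : ℕ} [Fact q.Prime] [Fact r.Prime] {z y : G}
    (hz : orderOf z = q) (hy : orderOf y = r) (hyz : y * z * y⁻¹ ∈ zpowers z)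
    (hnc : ∀ i : ZMod r, i ≠ 0 → ¬ Commute (y ^ i.val) z)
    (hfix : ∀ g : G, orderOf g = q ∨ orderOf g = r →
      FixedPointFree (MulAut.conjNormal g : MulAut B)) (b : B) :
    b ^ q = 1 := by
  have hzq : z ^ q = 1 := hz ▸ pow_orderOf_eq_one z
  have hyr : y ^ r = 1 := hy ▸ pow_orderOf_eq_one y
  have hzfin : IsOfFinOrder z := isOfFinOrder_iff_pow_eq_one.mpr ⟨q, (Fact.out : q.Prime).pos, hzq⟩
  obtain ⟨k, hk⟩ : ∃ k : ℕ, z ^ k = y * z * y⁻¹ := hzfin.mem_powers_iff_mem_zpowers.mpr hyz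
  have hκ : ∀ i : ZMod r, i ≠ 0 → 1 - (k : ZMod q) ^ i.val ≠ 0 := fun i hi h ↦ hnc i hi <| by
    have h' := conj_pow_eq_pow_pow hk.symm i.val
    rw [pow_eq_pow_of_natCast_eq hzq (b := 1) (by push_cast; exact (sub_eq_zero.mp h).symm),
      pow_one] at h'
    exact mul_inv_eq_iff_eq_mul.mp h'
  refine pow_eq_one_of_fixedPointFree MulAut.conjNormal (α := y)
    (γ := fun c ↦ z ^ c.val * y * (z ^ c.val)⁻¹) hzq
    (fun c ↦ by rw [conj_pow, hyr, mul_one, mul_inv_cancel]) (hfix z (Or.inl hz))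
    (fun c ↦ hfix _ (Or.inr ?_)) (fun i hi ↦ ⟨Equiv.mulRight₀ _ (hκ i hi), fun c ↦ ?_⟩) b
  · rw [← MulAut.conj_apply, MulEquiv.orderOf_eq, hy]
  · -- `z ^ c * y ^ i * z⁻¹ ^ c = z ^ (c * (1 - k ^ i)) * y ^ i`
    have hyc : y ^ i.val * z ^ c.val = z ^ (k ^ i.val * c.val) * y ^ i.val := by
      rw [pow_mul, ← conj_pow_eq_pow_pow hk.symm, conj_pow, inv_mul_cancel_right]
    rw [conj_pow, eq_mul_inv_iff_mul_eq, mul_assoc, hyc, ← mul_assoc, ← pow_add,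
      pow_eq_pow_of_natCast_eq hzq (b := c.val)]
    push_cast [ZMod.natCast_val, ZMod.cast_id', id_eq, Equiv.mulRight₀_apply]
    ring

end Action

section Core

variable {G : Type*} [Group G] [Finite G]

theorem exists_orderOf_eq_mul_of_isPGroup {p q r : ℕ} (hp : p.Prime) (hq : q.Prime)
    (hr : r.Prime) (hpq : p ≠ q) (hpr : p ≠ r) (hqr : q ≠ r) {B M : Subgroup G} [B.Normal]
    [IsMulCommutative B] [IsMulCommutative M] (hBp : IsPGroup p B) (hB : B ≠ ⊥)
    (hMq : IsPGroup q M) (hM : M ≠ ⊥) {y : G} (hy : orderOf y = r)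
    (hyM : y ∈ normalizer (M : Set G)) :
    ∃ g : G, orderOf g = p * q ∨ orderOf g = p * r ∨ orderOf g = q * r := by
  have : Fact p.Prime := ⟨hp⟩
  have : Fact q.Prime := ⟨hq⟩
  have : Fact r.Prime := ⟨hr⟩
  by_contra! hno
  have hfix : ∀ g : G, orderOf g = q ∨ orderOf g = r →
      FixedPointFree (MulAut.conjNormal g : MulAut B) := by
    rintro g (hg | hg) <;> refine fixedPointFree_conjNormal hBp ?_ fun h ↦ ?_ <;> rw [hg]
    · exact (Nat.coprime_primes hq hp).mpr hpq.symm
    · rw [mul_comm]; exact (hno h).1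
    · exact (Nat.coprime_primes hr hp).mpr hpr.symm
    · rw [mul_comm]; exact (hno h).2.1
  suffices hBq : ∀ b : B, b ^ q = 1 by
    obtain ⟨b, hb⟩ := ne_bot_iff_exists_ne_one.mp hB
    exact hpq ((Nat.prime_dvd_prime_iff_eq hp hq).mp
      ((hBp.dvd_orderOf hb).trans (orderOf_dvd_of_pow_eq_one (hBq b))))
  obtain ⟨z, hz⟩ := exists_prime_orderOf_dvd_card' q
    (hMq.card_eq_or_dvd.resolve_left (mt card_eq_one.mp hM))
  rw [← orderOf_coe] at hz
  by_cases hrank : ∃ w ∈ M, w ^ q = 1 ∧ w ∉ zpowers (z : G)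
  · obtain ⟨w, hwM, hwq, hwz⟩ := hrank
    exact pow_eq_one_of_commute_of_notMem_zpowers (setLike_mul_comm z.2 hwM)
      hz hwq hwz fun g hg ↦ hfix g (Or.inl hg)
  · push Not at hrank
    have hyzM : y * z * y⁻¹ ∈ M := (mem_normalizer_iff.mp hyM _).mp z.2
    refine pow_eq_one_of_conj_mem_zpowers hz hy (hrank _ hyzM
      (by rw [conj_pow, ← hz, pow_orderOf_eq_one, mul_one, mul_inv_cancel]))
      (fun i hi hcomm ↦ ?_) hfix
    have hcop : (orderOf y).Coprime i.val := by
      rw [hy, hr.coprime_iff_not_dvd]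
      exact Nat.not_dvd_of_pos_of_lt (Nat.pos_of_ne_zero ((ZMod.val_ne_zero i).mpr hi)) i.val_lt
    have hyi : orderOf (y ^ i.val) = r := by rw [hcop.orderOf_pow, hy]
    exact (hno _).2.2 (by rw [hcomm.symm.orderOf_mul_eq_mul_orderOf_of_coprime (by
      rw [hz, hyi]; exact (Nat.coprime_primes hq hr).mpr hqr), hz, hyi])

end Core

section Main

variable {G : Type u} [Group G] [Finite G] [Group.IsSolvable G]

theorem exists_orderOf_eq_mul_of_normal_isPGroup {t u v : ℕ} (ht : t.Prime) (hu : u.Prime)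
    (hv : v.Prime) (htu : t ≠ u) (htv : t ≠ v) (huv : u ≠ v) {B : Subgroup G} [B.Normal]
    [IsMulCommutative B] (hBt : IsPGroup t B) (hB : B ≠ ⊥) (hdu : u ∣ Nat.card G)
    (hdv : v ∣ Nat.card G) :
    ∃ g : G, orderOf g = t * u ∨ orderOf g = t * v ∨ orderOf g = u * v := by
  obtain ⟨s, K, M, hsπ, hs, hKdvd, hKM, hMc, hMs, hM⟩ :=
    exists_isPGroup_isMulCommutative_le_normalizer (π := {u, v}) (Set.mem_insert u _) hu hdu
  rcases hsπ with rfl | rfl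
  · have : Fact v.Prime := ⟨hv⟩
    obtain ⟨y, hy⟩ := exists_prime_orderOf_dvd_card' v (hKdvd v (by simp) hv hdv)
    exact exists_orderOf_eq_mul_of_isPGroup ht hs hv htu htv huv hBt hB hMs hM
      (by rwa [orderOf_coe]) (hKM y.2)
  · have : Fact u.Prime := ⟨hu⟩
    obtain ⟨y, hy⟩ := exists_prime_orderOf_dvd_card' u (hKdvd u (by simp) hu hdu)
    obtain ⟨g, hg⟩ := exists_orderOf_eq_mul_of_isPGroup ht hs hu htv htu huv.symm hBt hB hMs hM
      (by rwa [orderOf_coe]) (hKM y.2)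
    exact ⟨g, by grind⟩

theorem exists_orderOf_eq_mul_of_isSigmaGroup {p q r : ℕ} (hp : p.Prime) (hq : q.Prime)
    (hr : r.Prime) (hpq : p ≠ q) (hpr : p ≠ r) (hqr : q ≠ r) (hG : IsSigmaGroup {p, q, r} G)
    (hdp : p ∣ Nat.card G) (hdq : q ∣ Nat.card G) (hdr : r ∣ Nat.card G) :
    ∃ g : G, orderOf g = p * q ∨ orderOf g = p * r ∨ orderOf g = q * r := by
  have : Nontrivial G := Finite.one_lt_card_iff_nontrivial.mp
    (hp.one_lt.trans_le (Nat.le_of_dvd Nat.card_pos hdp))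
  obtain ⟨t, B, ht, hBn, hBc, hBt, hB⟩ := exists_normal_isPGroup_isMulCommutative (G := G)
  have : Fact t.Prime := ⟨ht⟩
  rcases hG t ht ((hBt.card_eq_or_dvd.resolve_left (mt card_eq_one.mp hB)).trans
    (card_subgroup_dvd_card B)) with rfl | rfl | rfl
  · exact exists_orderOf_eq_mul_of_normal_isPGroup ht hq hr hpq hpr hqr hBt hB hdq hdr
  · obtain ⟨g, hg⟩ := exists_orderOf_eq_mul_of_normal_isPGroup ht hp hr hpq.symm hqr hpr hBt hB
      hdp hdr
    exact ⟨g, by grind⟩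
  · obtain ⟨g, hg⟩ := exists_orderOf_eq_mul_of_normal_isPGroup ht hp hq hpr.symm hqr.symm hpq
      hBt hB hdp hdq
    exact ⟨g, by grind⟩

end Main

/-- **Lucido's three-primes lemma.** If `G` is a finite solvable group and `p, q, r` are
distinct primes dividing `|G|`, then `G` has an element of order `pq`, `pr` or `qr`. -/
theorem three_primes (G : Type*) [Group G] [Finite G] [Group.IsSolvable G]
    (p q r : ℕ) (hp : p.Prime) (hq : q.Prime) (hr : r.Prime)
    (hpq : p ≠ q) (hpr : p ≠ r) (hqr : q ≠ r)
    (hdp : p ∣ Nat.card G) (hdq : q ∣ Nat.card G) (hdr : r ∣ Nat.card G) :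
    ∃ g : G, orderOf g = p * q ∨ orderOf g = p * r ∨ orderOf g = q * r := by
  obtain ⟨L, hLπ, hLdvd⟩ := exists_isSigmaGroup_dvd_card (G := G) {p, q, r}
  obtain ⟨g, hg⟩ := exists_orderOf_eq_mul_of_isSigmaGroup hp hq hr hpq hpr hqr hLπ
    (hLdvd p (by simp) hp hdp) (hLdvd q (by simp) hq hdq) (hLdvd r (by simp) hr hdr)
  exact ⟨g, by rwa [orderOf_coe]⟩
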